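/- arXiv:1211.3613 — 5 statements merged into one kernel-verified Lean document; each statement's English description precedes it below -/
import Mathlib

section
/- Let θ ≤ 1/4 and let a₁ > 0, a₀ ≥ 0, σ > 0 be real numbers with σ ≠ σ₀ := 2a₁θ/(1 - 2a₀θ) (when 2a₀θ ≠ 1). Define γ(0) = 1 + (a₁ + a₀σ)/d(0) where d(0) = (σ - σ₀)(1 - 2a₀θ). Then |γ(0)| > 1; more precisely γ(0) > 1 if d(0) > 0 and γ(0) < -1 if d(0) < 0. If 2a₀θ = 1 then γ(0) = 1 - a₀ - a₀²σ/a₁ < -1. -/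
/-!
For `2a₀θ ≠ 1` the denominator is `d = σ(1 - 2a₀θ) - 2a₁θ` and the numerator `N = a₁ + a₀σ` is
positive, so `γ(0) = 1 + N/d > 1` when `d > 0`. When `d < 0`, `γ(0) < -1` amounts to `N + 2d > 0`,
and `N + 2d = a₁(1 - 4θ) + σ(2 + a₀(1 - 4θ))` is positive because `θ ≤ 1/4`.
For `2a₀θ = 1` the same bound on `θ` forces `a₀ ≥ 2`.
-/

section OneAddDiv

variable {N d : ℝ}

lemma one_lt_one_add_div (hN : 0 < N) (hd : 0 < d) : 1 < 1 + N / d := by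
  have := div_pos hN hd
  linarith

lemma one_add_div_lt_neg_one (hd : d < 0) (hNd : -(2 * d) < N) : 1 + N / d < -1 := by
  have : N / d < -2 := by
    rw [div_lt_iff_of_neg hd]
    linarith
  linarith

lemma one_lt_abs_one_add_div (hN : 0 < N) (hNd : -(2 * d) < N) (hd : d ≠ 0) :
    1 < |1 + N / d| := by
  rcases hd.lt_or_gt with hneg | hpos
  · have := one_add_div_lt_neg_one hneg hNd
    rw [abs_of_neg (by linarith)]
    linarith
  · exact (one_lt_one_add_div hN hpos).trans_le (le_abs_self _)

end OneAddDiv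

lemma sub_div_mul_cancel_right {K : Type*} [DivisionRing K] (x y : K) {u : K} (hu : u ≠ 0) :
    (x - y / u) * u = x * u - y := by
  rw [sub_mul, div_mul_cancel₀ _ hu]

section Gamma

variable {θ a₁ a₀ σ : ℝ}

lemma neg_two_mul_denom_lt (hθ : θ ≤ 1 / 4) (ha₁ : 0 < a₁) (ha₀ : 0 ≤ a₀) (hσ : 0 < σ) :
    -(2 * (σ * (1 - 2 * a₀ * θ) - 2 * a₁ * θ)) < a₁ + a₀ * σ := by
  have h4θ : 0 ≤ 1 - 4 * θ := by linarith
  nlinarith [mul_nonneg ha₁.le h4θ, mul_nonneg (mul_nonneg ha₀ hσ.le) h4θ]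

lemma two_le_of_two_mul_mul_eq_one (hθ : θ ≤ 1 / 4) (ha₀ : 0 ≤ a₀) (h : 2 * a₀ * θ = 1) :
    2 ≤ a₀ := by
  nlinarith [mul_le_mul_of_nonneg_left hθ ha₀]

end Gamma

/-- sign properties of γ(0) for the characteristic equation. -/
theorem stmt_0 (θ a₁ a₀ σ : ℝ) (hθ : θ ≤ 1/4) (ha₁ : 0 < a₁) (ha₀ : 0 ≤ a₀)
    (hσ : 0 < σ) :
    ((2*a₀*θ ≠ 1 → σ ≠ 2*a₁*θ/(1 - 2*a₀*θ) →
      (|1 + (a₁ + a₀*σ)/((σ - 2*a₁*θ/(1 - 2*a₀*θ))*(1 - 2*a₀*θ))| > 1 ∧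
       ((σ - 2*a₁*θ/(1 - 2*a₀*θ))*(1 - 2*a₀*θ) > 0 →
          1 + (a₁ + a₀*σ)/((σ - 2*a₁*θ/(1 - 2*a₀*θ))*(1 - 2*a₀*θ)) > 1) ∧
       ((σ - 2*a₁*θ/(1 - 2*a₀*θ))*(1 - 2*a₀*θ) < 0 →
          1 + (a₁ + a₀*σ)/((σ - 2*a₁*θ/(1 - 2*a₀*θ))*(1 - 2*a₀*θ)) < -1)))
     ∧ (2*a₀*θ = 1 → 1 - a₀ - a₀^2*σ/a₁ < -1)) := by
  constructor
  · intro hθ₀ hσ₀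
    have hu : 1 - 2 * a₀ * θ ≠ 0 := sub_ne_zero.mpr (Ne.symm hθ₀)
    have hd : (σ - 2 * a₁ * θ / (1 - 2 * a₀ * θ)) * (1 - 2 * a₀ * θ) ≠ 0 :=
      mul_ne_zero (sub_ne_zero.mpr hσ₀) hu
    have hN : 0 < a₁ + a₀ * σ := by positivity
    have hNd := neg_two_mul_denom_lt hθ ha₁ ha₀ hσ
    rw [← sub_div_mul_cancel_right σ (2 * a₁ * θ) hu] at hNd
    exact ⟨one_lt_abs_one_add_div hN hNd hd, one_lt_one_add_div hN,
      fun hneg => one_add_div_lt_neg_one hneg hNd⟩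
  · intro h
    have ha₀₂ := two_le_of_two_mul_mul_eq_one hθ ha₀ h
    have : 0 < a₀ ^ 2 * σ / a₁ := by positivity
    linarith
end

section
/- Define R^m = 2a₁√δ · κ^m (P_m(μ) - P_{m-2}(μ))/(2m-1) for m ≥ 0, where P_m are Legendre polynomials with P_m ≡ 0 for m < 0, a₁ > 0, δ > 0 are constants, and κ, μ ∈ ℂ. Then R satisfies the recurrence R^m = ((2m-3)/m) κμ R^{m-1} - ((m-3)/m) κ² R^{m-2} for m ≥ 2, with R^0 = -2a₁√δ and R^1 = 2a₁√δ κμ. -/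
/-- The Legendre polynomials (as functions), via the three-term recurrence. -/
noncomputable def leg {K : Type*} [Field K] : ℕ → K → K
  | 0, _ => 1
  | 1, x => x
  | (n+2), x => ((2*(n:K)+3) * x * leg (n+1) x - ((n:K)+1) * leg n x) / ((n:K)+2)

/-- Legendre polynomials extended by `0` to negative indices. -/
noncomputable def legZ {K : Type*} [Field K] (m : ℤ) (x : K) : K :=
  if m < 0 then 0 else leg m.toNat x

/-! Extended by `P_m := 0` for `m < 0`, the Legendre recurrence
`r_m : m P_m = (2m-1) x P_{m-1} - (m-1) P_{m-2}` holds at every integer `m`. The recurrence of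
`Q_m := (P_m - P_{m-2})/(2m-1)` is the combination `(2m-5) r_m - (2m-1) r_{m-2}`, and
`R^m = 2a₁√δ κ^m Q_m`. -/

section Legendre

variable {K : Type*} [Field K]

@[simp]
lemma legZ_natCast (n : ℕ) (x : K) : legZ (n : ℤ) x = leg n x := by
  simp [legZ]

lemma legZ_of_neg {m : ℤ} (hm : m < 0) (x : K) : legZ m x = 0 := by
  simp [legZ, hm]

variable [CharZero K]

lemma leg_add_two_mul (n : ℕ) (x : K) :
    ((n : K) + 2) * leg (n + 2) x = (2 * n + 3) * x * leg (n + 1) x - (n + 1) * leg n x := by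
  rw [leg, mul_div_cancel₀ _ (by exact_mod_cast (n + 1).succ_ne_zero)]

lemma legZ_three_term (m : ℤ) (x : K) :
    (m : K) * legZ m x = (2 * m - 1) * x * legZ (m - 1) x - (m - 1) * legZ (m - 2) x := by
  rcases lt_or_ge m 2 with hm | hm
  · rcases (show m < 0 ∨ m = 0 ∨ m = 1 by omega) with hm | rfl | rfl
    · simp [legZ_of_neg, hm, show m - 1 < 0 by omega, show m - 2 < 0 by omega]
    · norm_num [legZ, leg]
    · norm_num [legZ, leg]
  · obtain ⟨n, rfl⟩ : ∃ n : ℕ, m = n + 2 := ⟨(m - 2).toNat, by omega⟩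
    have h1 : (n : ℤ) + 2 - 1 = ((n + 1 : ℕ) : ℤ) := by push_cast; ring
    have h2 : (n : ℤ) + 2 - 2 = n := by ring
    rw [h1, h2, show (n : ℤ) + 2 = ((n + 2 : ℕ) : ℤ) by push_cast; ring]
    simp only [legZ_natCast]
    push_cast
    linear_combination leg_add_two_mul n x

noncomputable def legKernel (m : ℤ) (x : K) : K :=
  (legZ m x - legZ (m - 2) x) / (2 * m - 1)

lemma legKernel_recurrence {m : ℤ} (hm : (m : K) ≠ 0) (x : K) :
    legKernel m x =
      (2 * m - 3) / m * x * legKernel (m - 1) x - (m - 3) / m * legKernel (m - 2) x := by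
  have h1 : 2 * (m : K) - 1 ≠ 0 := by exact_mod_cast (show 2 * m - 1 ≠ 0 by omega)
  have h3 : 2 * ((m : K) - 1) - 1 ≠ 0 := by exact_mod_cast (show 2 * (m - 1) - 1 ≠ 0 by omega)
  have h5 : 2 * ((m : K) - 2) - 1 ≠ 0 := by exact_mod_cast (show 2 * (m - 2) - 1 ≠ 0 by omega)
  have rm := legZ_three_term m x
  have rm2 := legZ_three_term (m - 2) x
  rw [show m - 2 - 1 = m - 1 - 2 by ring] at rm2
  simp only [legKernel]
  push_cast at rm2 ⊢
  field_simp
  linear_combination (2 * (m : K) - 3) * ((2 * (m : K) - 5) * rm - (2 * (m : K) - 1) * rm2)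

end Legendre

theorem stmt_7_general (a₁ δ : ℝ) (κ μ : ℂ) (R : ℕ → ℂ)
    (hR : ∀ m : ℕ, R m = 2*(a₁:ℂ)*(Real.sqrt δ : ℂ) * κ^m *
        (legZ (m:ℤ) μ - legZ ((m:ℤ) - 2) μ) / (2*(m:ℂ) - 1)) :
    (∀ m : ℕ, 2 ≤ m →
      R m = ((2*(m:ℂ) - 3)/(m:ℂ)) * κ * μ * R (m-1)
            - (((m:ℂ) - 3)/(m:ℂ)) * κ^2 * R (m-2))
    ∧ R 0 = -(2*(a₁:ℂ)*(Real.sqrt δ : ℂ))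
    ∧ R 1 = 2*(a₁:ℂ)*(Real.sqrt δ : ℂ)*κ*μ := by
  set c : ℂ := 2 * (a₁ : ℂ) * (Real.sqrt δ : ℂ)
  have hR' (m : ℕ) : R m = c * κ ^ m * legKernel m μ := by
    rw [hR, legKernel, mul_div_assoc, Int.cast_natCast]
  refine ⟨fun m hm => ?_, ?_, ?_⟩
  · obtain ⟨n, rfl⟩ := Nat.exists_eq_add_of_le' hm
    have hrec := legKernel_recurrence (K := ℂ) (m := (n + 2 : ℕ))
      (by exact_mod_cast (n + 1).succ_ne_zero) μ
    rw [show ((n + 2 : ℕ) : ℤ) - 1 = (n + 1 : ℕ) by push_cast; ring,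
      show ((n + 2 : ℕ) : ℤ) - 2 = n by push_cast; ring] at hrec
    rw [Nat.add_sub_cancel, show n + 2 - 1 = n + 1 by omega, hR', hR', hR', hrec]
    push_cast
    ring
  · rw [hR']
    norm_num [legKernel, legZ, leg]
  · rw [hR']
    norm_num [legKernel, legZ, leg]

/-- the kernel `R^m = 2a₁√δ κ^m (P_m(μ) - P_{m-2}(μ))/(2m-1)` satisfies
the recurrence `R^m = ((2m-3)/m) κμ R^{m-1} - ((m-3)/m) κ² R^{m-2}` for `m ≥ 2`,
with `R^0 = -2a₁√δ` and `R^1 = 2a₁√δ κμ`. -/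
theorem stmt_7 (a₁ δ : ℝ) (ha₁ : 0 < a₁) (hδ : 0 < δ) (κ μ : ℂ) (R : ℕ → ℂ)
    (hR : ∀ m : ℕ, R m = 2*(a₁:ℂ)*(Real.sqrt δ : ℂ) * κ^m *
        (legZ (m:ℤ) μ - legZ ((m:ℤ) - 2) μ) / (2*(m:ℂ) - 1)) :
    (∀ m : ℕ, 2 ≤ m →
      R m = ((2*(m:ℂ) - 3)/(m:ℂ)) * κ * μ * R (m-1)
            - (((m:ℂ) - 3)/(m:ℂ)) * κ^2 * R (m-2))
    ∧ R 0 = -(2*(a₁:ℂ)*(Real.sqrt δ : ℂ))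
    ∧ R 1 = 2*(a₁:ℂ)*(Real.sqrt δ : ℂ)*κ*μ :=
  stmt_7_general a₁ δ κ μ R hR
end

section
/- With d(z) = 2a₁θ(z-1) + (1-2a₀θ)z^{(σ)}, γ(z) = 1 + (a₁(1-z) + a₀z^{(σ)})/d(z), z^{(σ)} = σ + (1-σ)z, a₁ > 0, a₀ ≥ 0, d₀ = a₀/a₁, d₁ = 2/a₁, the polynomial identity d(z)²(γ(z)² - 1) = a₁²(1 - z + d₀z^{(σ)})[(1-4θ)(1-z) + (d₁ + d₀(1-4θ))z^{(σ)}] = a₁²δ(α z² - 2βz + 1) holds, where δ = (1+σd₀)[(1+σd₀)(1-4θ) + σd₁], α = α₀α₁, β = (α₀+α₁)/2, α₀ = 1 - d₀/(1+σd₀), α₁ = 1 - (d₀(1-4θ)+d₁)/((1+σd₀)(1-4θ)+σd₁). -/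
/-!
Writing `γ = 1 + n/d`, one has `d²(γ² - 1) = n(2d + n)`, and both `n` and `2d + n` are `a₁` times
a linear polynomial in `z`. Each of these linear factors has the form `u(1 - z) + v z^{(σ)}`, with
value `u + vσ` at `z = 0`; when that value is nonzero the factor is `(u + vσ)(1 - αᵢ z)`, which
yields `δ = (1 + σd₀)((1 + σd₀)(1 - 4θ) + σd₁)` and the quadratic `(1 - α₀z)(1 - α₁z)`.
-/

theorem sq_mul_one_add_div_sq_sub_one {K : Type*} [Field K] {d n : K} (hd : d ≠ 0) :
    d ^ 2 * ((1 + n / d) ^ 2 - 1) = n * (2 * d + n) := by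
  field_simp
  ring

theorem mul_one_sub_add_mul_sigma_eq {K : Type*} [Field K] {u v q : K} (σ z : K)
    (hq : u + v * σ = q) (hq₀ : q ≠ 0) :
    u * (1 - z) + v * (σ + (1 - σ) * z) = q * (1 - (1 - v / q) * z) := by
  subst hq
  field_simp
  ring

theorem stmt_9_general (a₁ a₀ θ σ : ℝ) (ha₁ : 0 < a₁)
    (d₀ d₁ δ α₀ α₁ α β : ℝ)
    (hd₀ : d₀ = a₀/a₁) (hd₁ : d₁ = 2/a₁)
    (hδ : δ = (1 + σ*d₀)*((1 + σ*d₀)*(1 - 4*θ) + σ*d₁))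
    (hα₀ : α₀ = 1 - d₀/(1 + σ*d₀))
    (hα₁ : α₁ = 1 - (d₀*(1 - 4*θ) + d₁)/((1 + σ*d₀)*(1 - 4*θ) + σ*d₁))
    (hα : α = α₀*α₁) (hβ : β = (α₀ + α₁)/2) (hδ0 : δ ≠ 0) :
    ∀ z : ℝ,
      2*a₁*θ*(z - 1) + (1 - 2*a₀*θ)*(σ + (1 - σ)*z) ≠ 0 →
      ((2*a₁*θ*(z - 1) + (1 - 2*a₀*θ)*(σ + (1 - σ)*z))^2 *
        ((1 + (a₁*(1 - z) + a₀*(σ + (1 - σ)*z)) /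
            (2*a₁*θ*(z - 1) + (1 - 2*a₀*θ)*(σ + (1 - σ)*z)))^2 - 1)
        = a₁^2 * (1 - z + d₀*(σ + (1 - σ)*z)) *
            ((1 - 4*θ)*(1 - z) + (d₁ + d₀*(1 - 4*θ))*(σ + (1 - σ)*z))
      ∧ a₁^2 * (1 - z + d₀*(σ + (1 - σ)*z)) *
            ((1 - 4*θ)*(1 - z) + (d₁ + d₀*(1 - 4*θ))*(σ + (1 - σ)*z))
        = a₁^2 * δ * (α*z^2 - 2*β*z + 1)) := by
  intro z hz
  obtain ⟨hp, hq⟩ := mul_ne_zero_iff.mp (hδ ▸ hδ0)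
  refine ⟨?_, ?_⟩
  · rw [sq_mul_one_add_div_sq_sub_one hz, hd₀, hd₁]
    field_simp
    ring
  · have h₀ : 1 - z + d₀ * (σ + (1 - σ) * z) = (1 + σ * d₀) * (1 - α₀ * z) := by
      simpa only [one_mul, ← hα₀] using
        mul_one_sub_add_mul_sigma_eq (u := 1) (v := d₀) σ z (by ring) hp
    have h₁ : (1 - 4*θ)*(1 - z) + (d₁ + d₀*(1 - 4*θ))*(σ + (1 - σ)*z)
        = ((1 + σ*d₀)*(1 - 4*θ) + σ*d₁) * (1 - α₁ * z) := by
      rw [add_comm d₁, hα₁]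
      exact mul_one_sub_add_mul_sigma_eq σ z (by ring) hq
    rw [h₀, h₁, hδ, hα, hβ]
    ring

/-- the algebraic identity
`d(z)²(γ(z)² - 1) = a₁²(1 - z + d₀z^{(σ)})[(1-4θ)(1-z) + (d₁ + d₀(1-4θ))z^{(σ)}]
 = a₁²δ(αz² - 2βz + 1)` underlying the discrete TBC kernel. -/
theorem stmt_9 (a₁ a₀ θ σ : ℝ) (ha₁ : 0 < a₁) (ha₀ : 0 ≤ a₀)
    (d₀ d₁ δ α₀ α₁ α β : ℝ)
    (hd₀ : d₀ = a₀/a₁) (hd₁ : d₁ = 2/a₁)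
    (hδ : δ = (1 + σ*d₀)*((1 + σ*d₀)*(1 - 4*θ) + σ*d₁))
    (hα₀ : α₀ = 1 - d₀/(1 + σ*d₀))
    (hα₁ : α₁ = 1 - (d₀*(1 - 4*θ) + d₁)/((1 + σ*d₀)*(1 - 4*θ) + σ*d₁))
    (hα : α = α₀*α₁) (hβ : β = (α₀ + α₁)/2) (hδ0 : δ ≠ 0) :
    ∀ z : ℝ,
      2*a₁*θ*(z - 1) + (1 - 2*a₀*θ)*(σ + (1 - σ)*z) ≠ 0 →
      ((2*a₁*θ*(z - 1) + (1 - 2*a₀*θ)*(σ + (1 - σ)*z))^2 *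
        ((1 + (a₁*(1 - z) + a₀*(σ + (1 - σ)*z)) /
            (2*a₁*θ*(z - 1) + (1 - 2*a₀*θ)*(σ + (1 - σ)*z)))^2 - 1)
        = a₁^2 * (1 - z + d₀*(σ + (1 - σ)*z)) *
            ((1 - 4*θ)*(1 - z) + (d₁ + d₀*(1 - 4*θ))*(σ + (1 - σ)*z))
      ∧ a₁^2 * (1 - z + d₀*(σ + (1 - σ)*z)) *
            ((1 - 4*θ)*(1 - z) + (d₁ + d₀*(1 - 4*θ))*(σ + (1 - σ)*z))
        = a₁^2 * δ * (α*z^2 - 2*β*z + 1)) :=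
  stmt_9_general a₁ a₀ θ σ ha₁ d₀ d₁ δ α₀ α₁ α β hd₀ hd₁ hδ hα₀ hα₁ hα hβ hδ0
end

section
/- Let H be a Hilbert space, B bounded self-adjoint with (Bw,w) ≥ c‖w‖² (c > 0), A bounded self-adjoint nonnegative, σ ≥ 1/2. If U^m satisfies B∂̄_tU^m + AU^{(σ)m} = 0 for 1 ≤ m ≤ M, then the second energy identity Σ_{m=1}^M (B∂̄_tU^m, ∂̄_tU^m)τ_m + (1/2)(AU^M, U^M) + Σ_{m=1}^M (σ-1/2)τ_m²(A∂̄_tU^m, ∂̄_tU^m) = (1/2)(AU^0, U^0) holds; in particular (AU^M, U^M) ≤ (AU^0, U^0). -/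
/-!
Pairing the scheme at step `m` with `U^m - U^{m-1} = τ_m ∂̄_tU^m` and splitting
`U^{(σ)m} = (U^m + U^{m-1})/2 + (σ - 1/2)(U^m - U^{m-1})` turns the `A`-term, by symmetry of `A`,
into the energy decrement `(AU^m, U^m)/2 - (AU^{m-1}, U^{m-1})/2` plus the numerical dissipation
`(σ - 1/2) τ_m² (A∂̄_tU^m, ∂̄_tU^m)`. Summing over `m` telescopes; the inequality follows because
both dissipation sums are nonnegative when `B` is coercive, `A ≥ 0` and `σ ≥ 1/2`.
-/
open Finset RealInnerProductSpace

theorem Finset.sum_Icc_one_sub_pred {G : Type*} [AddCommGroup G] (f : ℕ → G) (n : ℕ) :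
    ∑ m ∈ Icc 1 n, (f (m - 1) - f m) = f 0 - f n := by
  induction n with
  | zero => simp
  | succ n ih =>
    rw [sum_Icc_succ_top (Nat.le_add_left 1 n), ih, Nat.add_sub_cancel]
    abel

section EnergyStep

variable {H : Type*} [NormedAddCommGroup H] [InnerProductSpace ℝ H] {A : H →ₗ[ℝ] H}

theorem LinearMap.IsSymmetric.inner_map_weighted_sub (hA : A.IsSymmetric) (σ : ℝ) (u v : H) :
    ⟪A (σ • u + (1 - σ) • v), u - v⟫
      = (1/2) * (⟪A u, u⟫ - ⟪A v, v⟫) + (σ - 1/2) * ⟪A (u - v), u - v⟫ := by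
  have hsym : ⟪A u, v⟫ = ⟪A v, u⟫ := by rw [hA u v, real_inner_comm]
  simp only [map_add, map_sub, map_smul, inner_add_left, inner_sub_left, inner_sub_right,
    real_inner_smul_left, hsym]
  ring

theorem energy_step_of_scheme (hA : A.IsSymmetric) (B : H → H) {σ τ : ℝ} (hτ : τ ≠ 0)
    {u v : H} (h : B (τ⁻¹ • (u - v)) + A (σ • u + (1 - σ) • v) = 0) :
    ⟪B (τ⁻¹ • (u - v)), τ⁻¹ • (u - v)⟫ * τ + (1/2) * ⟪A u, u⟫
      + (σ - 1/2) * τ ^ 2 * ⟪A (τ⁻¹ • (u - v)), τ⁻¹ • (u - v)⟫ = (1/2) * ⟪A v, v⟫ := by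
  set p := τ⁻¹ • (u - v)
  have hd : u - v = τ • p := (smul_inv_smul₀ hτ _).symm
  have hpair : ⟪B p + A (σ • u + (1 - σ) • v), u - v⟫ = 0 := by rw [h, inner_zero_left]
  rw [inner_add_left, hA.inner_map_weighted_sub, hd, map_smul] at hpair
  simp only [real_inner_smul_left, real_inner_smul_right] at hpair
  linear_combination hpair

end EnergyStep

theorem stmt_14_general {H : Type*} [NormedAddCommGroup H] [InnerProductSpace ℝ H]
    [CompleteSpace H] (B A : H →L[ℝ] H)
    (c : ℝ) (hc : 0 < c)
    (hB : ∀ w : H, c * ‖w‖^2 ≤ inner ℝ (B w) w)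
    (hAsa : IsSelfAdjoint A) (hA : ∀ w : H, (0:ℝ) ≤ inner ℝ (A w) w)
    (σ : ℝ) (hσ : 1/2 ≤ σ) (M : ℕ) (τ : ℕ → ℝ) (hτ : ∀ m, 0 < τ m)
    (U : ℕ → H)
    (hscheme : ∀ m : ℕ, 1 ≤ m → m ≤ M →
      B ((τ m)⁻¹ • (U m - U (m-1))) + A (σ • U m + (1 - σ) • U (m-1)) = 0) :
    (∑ m ∈ Finset.Icc 1 M,
        (inner ℝ (B ((τ m)⁻¹ • (U m - U (m-1)))) ((τ m)⁻¹ • (U m - U (m-1))) : ℝ) * τ m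
      + (1/2) * (inner ℝ (A (U M)) (U M) : ℝ)
      + ∑ m ∈ Finset.Icc 1 M,
          (σ - 1/2) * (τ m)^2 *
            (inner ℝ (A ((τ m)⁻¹ • (U m - U (m-1)))) ((τ m)⁻¹ • (U m - U (m-1))) : ℝ)
      = (1/2) * (inner ℝ (A (U 0)) (U 0) : ℝ))
    ∧ (inner ℝ (A (U M)) (U M) : ℝ) ≤ (inner ℝ (A (U 0)) (U 0) : ℝ) := by
  set e : ℕ → ℝ := fun k => (1/2) * ⟪A (U k), U k⟫
  set dU : ℕ → H := fun m => (τ m)⁻¹ • (U m - U (m - 1))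
  have hstep : ∀ m ∈ Icc 1 M,
      ⟪B (dU m), dU m⟫ * τ m + (σ - 1/2) * τ m ^ 2 * ⟪A (dU m), dU m⟫ = e (m - 1) - e m := by
    intro m hm
    obtain ⟨hm1, hmM⟩ := mem_Icc.mp hm
    linear_combination energy_step_of_scheme hAsa.isSymmetric B (hτ m).ne' (hscheme m hm1 hmM)
  have hsum := sum_congr rfl hstep
  rw [sum_add_distrib, sum_Icc_one_sub_pred] at hsum
  have hBpos : 0 ≤ ∑ m ∈ Icc 1 M, ⟪B (dU m), dU m⟫ * τ m := sum_nonneg fun m _ =>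
    mul_nonneg ((by positivity : 0 ≤ c * ‖dU m‖ ^ 2).trans (hB _)) (hτ m).le
  have hApos : 0 ≤ ∑ m ∈ Icc 1 M, (σ - 1/2) * τ m ^ 2 * ⟪A (dU m), dU m⟫ := sum_nonneg fun m _ =>
    mul_nonneg (mul_nonneg (by linarith) (sq_nonneg _)) (hA _)
  simp only [e, dU] at hsum hBpos hApos
  constructor <;> linarith

/-- second energy identity for the homogeneous two-level weighted scheme
`B ∂̄_t U^m + A U^{(σ)m} = 0`, obtained by pairing with `∂̄_t U^m`. -/
theorem stmt_14 {H : Type*} [NormedAddCommGroup H] [InnerProductSpace ℝ H]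
    [CompleteSpace H] (B A : H →L[ℝ] H)
    (hBsa : IsSelfAdjoint B) (c : ℝ) (hc : 0 < c)
    (hB : ∀ w : H, c * ‖w‖^2 ≤ inner ℝ (B w) w)
    (hAsa : IsSelfAdjoint A) (hA : ∀ w : H, (0:ℝ) ≤ inner ℝ (A w) w)
    (σ : ℝ) (hσ : 1/2 ≤ σ) (M : ℕ) (τ : ℕ → ℝ) (hτ : ∀ m, 0 < τ m)
    (U : ℕ → H)
    (hscheme : ∀ m : ℕ, 1 ≤ m → m ≤ M →
      B ((τ m)⁻¹ • (U m - U (m-1))) + A (σ • U m + (1 - σ) • U (m-1)) = 0) :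
    (∑ m ∈ Finset.Icc 1 M,
        (inner ℝ (B ((τ m)⁻¹ • (U m - U (m-1)))) ((τ m)⁻¹ • (U m - U (m-1))) : ℝ) * τ m
      + (1/2) * (inner ℝ (A (U M)) (U M) : ℝ)
      + ∑ m ∈ Finset.Icc 1 M,
          (σ - 1/2) * (τ m)^2 *
            (inner ℝ (A ((τ m)⁻¹ • (U m - U (m-1)))) ((τ m)⁻¹ • (U m - U (m-1))) : ℝ)
      = (1/2) * (inner ℝ (A (U 0)) (U 0) : ℝ))
    ∧ (inner ℝ (A (U M)) (U M) : ℝ) ≤ (inner ℝ (A (U 0)) (U 0) : ℝ) :=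
  stmt_14_general B A c hc hB hAsa hA σ hσ M τ hτ U hscheme
end

section
/- Let 0 = x₀ < x₁ < ⋯ < x_J with h_j = x_j - x_{j-1} and h_{j+1/2} = (h_j + h_{j+1})/2, and let θ ≤ 1/4. For a function W on the mesh with W₀ = 0, define ‖W‖²_{C_θ[ρ]} = Σ_{j=1}^{J-1} (C_θ[ρ]W)_j W_j h_{j+1/2} + ρ_J (θW_{J-1} + (1/2-θ)W_J) W_J h_J, where (C_θ[ρ]W)_j = θ(h_j/h_{j+1/2})ρ_j W_{j-1} + (1-2θ)(ŝ_xρ)_j W_j + θ(h_{j+1}/h_{j+1/2})ρ_{j+1}W_{j+1} and (ŝ_xρ)_j = (h_jρ_j + h_{j+1}ρ_{j+1})/(2h_{j+1/2}). If 0 < ρ̱ ≤ ρ_j ≤ ρ̄ for all j, then √(c_θ ρ̱)·‖W‖ ≤ ‖W‖_{C_θ[ρ]} ≤ √((1 + 4max{-θ,0})ρ̄)·‖W‖, where c_θ = 1 - 4max{θ,0} and ‖W‖² = Σ_{j=1}^{J-1} W_j² h_{j+1/2} + W_J² h_J/2. -/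
/-!
Both squared norms split over the cells `[x_{j-1}, x_j]`, `1 ≤ j ≤ J`: the mesh norm is the
trapezoidal rule `∑ h_j (W_{j-1}² + W_j²)/2`, and, after regrouping the three-point stencil cell by
cell, `‖W‖²_{C_θ[ρ]} = ∑ h_j ρ_j q_θ(W_{j-1}, W_j)` with `q_θ(a, b) = 2θab + (1-2θ)(a² + b²)/2`
(here `W₀ = 0` absorbs the boundary cell). Since
`q_θ(a, b) = (1 - 4θ)(a² + b²)/2 + θ(a + b)² = (a² + b²)/2 - θ(a - b)²`, the form `q_θ` lies
between `c_θ` and `1 + 4 max(-θ, 0)` times `(a² + b²)/2`, and the bounds on `ρ` finish the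
comparison cell by cell.
-/

open Finset

noncomputable def cellForm (θ a b : ℝ) : ℝ := 2 * θ * a * b + (1 - 2 * θ) * ((a ^ 2 + b ^ 2) / 2)

section cellForm

variable {θ : ℝ} (a b : ℝ)

lemma one_sub_mul_le_cellForm : (1 - 4 * max θ 0) * ((a ^ 2 + b ^ 2) / 2) ≤ cellForm θ a b := by
  unfold cellForm
  rcases le_total θ 0 with h | h
  · rw [max_eq_right h]; nlinarith [mul_nonneg (neg_nonneg.2 h) (sq_nonneg (a - b))]
  · rw [max_eq_left h]; nlinarith [mul_nonneg h (sq_nonneg (a + b))]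

lemma cellForm_le_one_add_mul : cellForm θ a b ≤ (1 + 4 * max (-θ) 0) * ((a ^ 2 + b ^ 2) / 2) := by
  unfold cellForm
  rcases le_total θ 0 with h | h
  · rw [max_eq_left (neg_nonneg.2 h)]; nlinarith [mul_nonneg (neg_nonneg.2 h) (sq_nonneg (a + b))]
  · rw [max_eq_right (neg_nonpos.2 h)]; nlinarith [mul_nonneg h (sq_nonneg (a - b))]

lemma one_sub_four_mul_max_nonneg (hθ : θ ≤ 1 / 4) : 0 ≤ 1 - 4 * max θ 0 := by
  rcases le_total θ 0 with h | h
  · rw [max_eq_right h]; norm_num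
  · rw [max_eq_left h]; linarith

lemma cellForm_nonneg (hθ : θ ≤ 1 / 4) : 0 ≤ cellForm θ a b :=
  (mul_nonneg (one_sub_four_mul_max_nonneg hθ) (by positivity)).trans
    (one_sub_mul_le_cellForm a b)

variable {a b} {r ρlo ρhi : ℝ}

lemma le_mul_cellForm (hθ : θ ≤ 1 / 4) (hlo : 0 ≤ ρlo) (hr : ρlo ≤ r) :
    (1 - 4 * max θ 0) * ρlo * ((a ^ 2 + b ^ 2) / 2) ≤ r * cellForm θ a b := by
  calc (1 - 4 * max θ 0) * ρlo * ((a ^ 2 + b ^ 2) / 2)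
      = ρlo * ((1 - 4 * max θ 0) * ((a ^ 2 + b ^ 2) / 2)) := by ring
    _ ≤ r * cellForm θ a b :=
      mul_le_mul hr (one_sub_mul_le_cellForm a b)
        (mul_nonneg (one_sub_four_mul_max_nonneg hθ) (by positivity)) (hlo.trans hr)

lemma mul_cellForm_le (hθ : θ ≤ 1 / 4) (hr0 : 0 ≤ r) (hr : r ≤ ρhi) :
    r * cellForm θ a b ≤ (1 + 4 * max (-θ) 0) * ρhi * ((a ^ 2 + b ^ 2) / 2) := by
  calc r * cellForm θ a b ≤ ρhi * ((1 + 4 * max (-θ) 0) * ((a ^ 2 + b ^ 2) / 2)) :=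
      mul_le_mul hr (cellForm_le_one_add_mul a b) (cellForm_nonneg a b hθ) (hr0.trans hr)
    _ = (1 + 4 * max (-θ) 0) * ρhi * ((a ^ 2 + b ^ 2) / 2) := by ring

end cellForm

lemma sum_Ico_add_eq_sum_Ico_of_step {M : Type*} [AddCommMonoid M] {F T c : ℕ → M} {J : ℕ}
    (hJ : 1 ≤ J) (h1 : T 1 = c 1)
    (hstep : ∀ n, 1 ≤ n → n < J → F n + T (n + 1) = T n + c (n + 1)) :
    ∑ j ∈ Ico 1 J, F j + T J = ∑ j ∈ Ico 1 (J + 1), c j := by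
  induction J, hJ using Nat.le_induction with
  | base => simp [h1]
  | succ n hn ih =>
    rw [sum_Ico_succ_top hn, add_assoc, hstep n hn n.lt_succ_self, ← add_assoc,
      ih fun k hk hkn => hstep k hk (hkn.trans n.lt_succ_self),
      sum_Ico_succ_top (show 1 ≤ n + 1 by omega) c]

noncomputable section MeshNorms

variable (θ : ℝ) (x ρ W : ℕ → ℝ) (J : ℕ)

/-- `‖W‖²`, with `h_j = x j - x (j-1)` and `h_{j+1/2} = (h_j + h_{j+1})/2`. -/
def meshNormSq : ℝ :=
  ∑ j ∈ Ico 1 J, (W j) ^ 2 * ((x j - x (j - 1)) + (x (j + 1) - x j)) / 2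
    + (W J) ^ 2 * (x J - x (J - 1)) / 2

/-- `‖W‖²_{C_θ[ρ]}`. -/
def averagedNormSq : ℝ :=
  ∑ j ∈ Ico 1 J,
      (θ * ((x j - x (j - 1)) / (((x j - x (j - 1)) + (x (j + 1) - x j)) / 2)) * ρ j * W (j - 1)
        + (1 - 2 * θ) *
            (((x j - x (j - 1)) * ρ j + (x (j + 1) - x j) * ρ (j + 1)) /
              (2 * (((x j - x (j - 1)) + (x (j + 1) - x j)) / 2))) * W j
        + θ * ((x (j + 1) - x j) / (((x j - x (j - 1)) + (x (j + 1) - x j)) / 2)) * ρ (j + 1)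
            * W (j + 1))
      * W j * (((x j - x (j - 1)) + (x (j + 1) - x j)) / 2)
    + ρ J * (θ * W (J - 1) + (1 / 2 - θ) * W J) * W J * (x J - x (J - 1))

variable {θ x ρ W J}

lemma sub_pred_nonneg_of_mem_Ico (hx : ∀ j, j < J → x j < x (j + 1)) {j : ℕ}
    (hj : j ∈ Ico 1 (J + 1)) : 0 ≤ x j - x (j - 1) := by
  rw [mem_Ico] at hj
  have := hx (j - 1) (by omega)
  rw [Nat.sub_add_cancel hj.1] at this
  linarith

lemma meshNormSq_eq_sum_cells (hJ : 1 ≤ J) (hW0 : W 0 = 0) :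
    meshNormSq x W J =
      ∑ j ∈ Ico 1 (J + 1), (x j - x (j - 1)) * ((W (j - 1) ^ 2 + W j ^ 2) / 2) := by
  unfold meshNormSq
  refine sum_Ico_add_eq_sum_Ico_of_step (T := fun j => W j ^ 2 * (x j - x (j - 1)) / 2) hJ
    (by simp only [tsub_self, hW0]; ring) fun n _ _ => ?_
  simp only [add_tsub_cancel_right]
  ring

lemma averagedNormSq_eq_sum_cells (hJ : 1 ≤ J) (hW0 : W 0 = 0)
    (hx : ∀ j, j < J → x j < x (j + 1)) :
    averagedNormSq θ x ρ W J =
      ∑ j ∈ Ico 1 (J + 1), (x j - x (j - 1)) * (ρ j * cellForm θ (W (j - 1)) (W j)) := by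
  unfold averagedNormSq
  refine sum_Ico_add_eq_sum_Ico_of_step
    (T := fun j => ρ j * (θ * W (j - 1) + (1 / 2 - θ) * W j) * W j * (x j - x (j - 1))) hJ
    (by simp only [tsub_self, hW0, cellForm]; ring) fun n hn hnJ => ?_
  have hsum : (x n - x (n - 1)) + (x (n + 1) - x n) ≠ 0 := by
    linarith [hx n hnJ, sub_pred_nonneg_of_mem_Ico hx (mem_Ico.2 ⟨hn, by omega⟩)]
  simp only [add_tsub_cancel_right, cellForm]
  field_simp
  ring

lemma le_averagedNormSq (hθ : θ ≤ 1 / 4) (hJ : 1 ≤ J) (hW0 : W 0 = 0)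
    (hx : ∀ j, j < J → x j < x (j + 1)) {ρlo : ℝ} (hlo : 0 ≤ ρlo)
    (hρ : ∀ j, 1 ≤ j → j ≤ J → ρlo ≤ ρ j) :
    (1 - 4 * max θ 0) * ρlo * meshNormSq x W J ≤ averagedNormSq θ x ρ W J := by
  rw [meshNormSq_eq_sum_cells hJ hW0, averagedNormSq_eq_sum_cells hJ hW0 hx, mul_sum]
  refine sum_le_sum fun j hj => ?_
  rw [mul_left_comm]
  have hjJ := mem_Ico.1 hj
  exact mul_le_mul_of_nonneg_left (le_mul_cellForm hθ hlo (hρ j hjJ.1 (by omega)))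
    (sub_pred_nonneg_of_mem_Ico hx hj)

lemma averagedNormSq_le (hθ : θ ≤ 1 / 4) (hJ : 1 ≤ J) (hW0 : W 0 = 0)
    (hx : ∀ j, j < J → x j < x (j + 1)) {ρhi : ℝ}
    (hρ : ∀ j, 1 ≤ j → j ≤ J → 0 ≤ ρ j ∧ ρ j ≤ ρhi) :
    averagedNormSq θ x ρ W J ≤ (1 + 4 * max (-θ) 0) * ρhi * meshNormSq x W J := by
  rw [meshNormSq_eq_sum_cells hJ hW0, averagedNormSq_eq_sum_cells hJ hW0 hx, mul_sum]
  refine sum_le_sum fun j hj => ?_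
  rw [mul_left_comm _ (x j - x (j - 1))]
  have hjJ := mem_Ico.1 hj
  have hρj := hρ j hjJ.1 (by omega)
  exact mul_le_mul_of_nonneg_left (mul_cellForm_le hθ hρj.1 hρj.2)
    (sub_pred_nonneg_of_mem_Ico hx hj)

end MeshNorms

theorem stmt_15_general (J : ℕ) (hJ : 1 ≤ J) (θ : ℝ) (hθ : θ ≤ 1/4)
    (x ρ W : ℕ → ℝ) (hxmono : ∀ j, j < J → x j < x (j+1))
    (hW0 : W 0 = 0) (ρlo ρhi : ℝ) (hρlo : 0 < ρlo)
    (hρ : ∀ j, 1 ≤ j → j ≤ J → ρlo ≤ ρ j ∧ ρ j ≤ ρhi) :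
    Real.sqrt ((1 - 4*max θ 0) * ρlo) *
      Real.sqrt (∑ j ∈ Finset.Ico 1 J,
          (W j)^2 * ((x j - x (j-1)) + (x (j+1) - x j))/2
        + (W J)^2 * (x J - x (J-1))/2)
      ≤ Real.sqrt (∑ j ∈ Finset.Ico 1 J,
            (θ * ((x j - x (j-1)) / (((x j - x (j-1)) + (x (j+1) - x j))/2)) * ρ j * W (j-1)
             + (1 - 2*θ) *
                 (((x j - x (j-1)) * ρ j + (x (j+1) - x j) * ρ (j+1)) /
                   (2 * (((x j - x (j-1)) + (x (j+1) - x j))/2))) * W j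
             + θ * ((x (j+1) - x j) / (((x j - x (j-1)) + (x (j+1) - x j))/2)) * ρ (j+1)
                 * W (j+1))
            * W j * (((x j - x (j-1)) + (x (j+1) - x j))/2)
          + ρ J * (θ * W (J-1) + (1/2 - θ) * W J) * W J * (x J - x (J-1)))
    ∧ Real.sqrt (∑ j ∈ Finset.Ico 1 J,
            (θ * ((x j - x (j-1)) / (((x j - x (j-1)) + (x (j+1) - x j))/2)) * ρ j * W (j-1)
             + (1 - 2*θ) *
                 (((x j - x (j-1)) * ρ j + (x (j+1) - x j) * ρ (j+1)) /
                   (2 * (((x j - x (j-1)) + (x (j+1) - x j))/2))) * W j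
             + θ * ((x (j+1) - x j) / (((x j - x (j-1)) + (x (j+1) - x j))/2)) * ρ (j+1)
                 * W (j+1))
            * W j * (((x j - x (j-1)) + (x (j+1) - x j))/2)
          + ρ J * (θ * W (J-1) + (1/2 - θ) * W J) * W J * (x J - x (J-1)))
      ≤ Real.sqrt ((1 + 4*max (-θ) 0) * ρhi) *
          Real.sqrt (∑ j ∈ Finset.Ico 1 J,
              (W j)^2 * ((x j - x (j-1)) + (x (j+1) - x j))/2
            + (W J)^2 * (x J - x (J-1))/2) := by
  have hρhi : 0 ≤ ρhi := hρlo.le.trans ((hρ 1 le_rfl hJ).1.trans (hρ 1 le_rfl hJ).2)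
  rw [← Real.sqrt_mul (mul_nonneg (one_sub_four_mul_max_nonneg hθ) hρlo.le),
    ← Real.sqrt_mul (mul_nonneg (by positivity) hρhi)]
  exact ⟨Real.sqrt_le_sqrt
      (le_averagedNormSq hθ hJ hW0 hxmono hρlo.le fun j h1 h2 => (hρ j h1 h2).1),
    Real.sqrt_le_sqrt (averagedNormSq_le hθ hJ hW0 hxmono fun j h1 h2 =>
      ⟨hρlo.le.trans (hρ j h1 h2).1, (hρ j h1 h2).2⟩)⟩

/-- norm equivalence between the averaged mesh norm `‖·‖_{C_θ[ρ]}`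
(with averaging weight `θ ≤ 1/4`) and the standard mesh L² norm, on mesh functions
vanishing at `x₀ = 0`. Here `h j = x j - x (j-1)` and `hh j = (h j + h (j+1))/2`. -/
theorem stmt_15 (J : ℕ) (hJ : 1 ≤ J) (θ : ℝ) (hθ : θ ≤ 1/4)
    (x ρ W : ℕ → ℝ) (hx0 : x 0 = 0) (hxmono : ∀ j, j < J → x j < x (j+1))
    (hW0 : W 0 = 0) (ρlo ρhi : ℝ) (hρlo : 0 < ρlo)
    (hρ : ∀ j, 1 ≤ j → j ≤ J → ρlo ≤ ρ j ∧ ρ j ≤ ρhi) :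
    Real.sqrt ((1 - 4*max θ 0) * ρlo) *
      Real.sqrt (∑ j ∈ Finset.Ico 1 J,
          (W j)^2 * ((x j - x (j-1)) + (x (j+1) - x j))/2
        + (W J)^2 * (x J - x (J-1))/2)
      ≤ Real.sqrt (∑ j ∈ Finset.Ico 1 J,
            (θ * ((x j - x (j-1)) / (((x j - x (j-1)) + (x (j+1) - x j))/2)) * ρ j * W (j-1)
             + (1 - 2*θ) *
                 (((x j - x (j-1)) * ρ j + (x (j+1) - x j) * ρ (j+1)) /
                   (2 * (((x j - x (j-1)) + (x (j+1) - x j))/2))) * W j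
             + θ * ((x (j+1) - x j) / (((x j - x (j-1)) + (x (j+1) - x j))/2)) * ρ (j+1)
                 * W (j+1))
            * W j * (((x j - x (j-1)) + (x (j+1) - x j))/2)
          + ρ J * (θ * W (J-1) + (1/2 - θ) * W J) * W J * (x J - x (J-1)))
    ∧ Real.sqrt (∑ j ∈ Finset.Ico 1 J,
            (θ * ((x j - x (j-1)) / (((x j - x (j-1)) + (x (j+1) - x j))/2)) * ρ j * W (j-1)
             + (1 - 2*θ) *
                 (((x j - x (j-1)) * ρ j + (x (j+1) - x j) * ρ (j+1)) /
                   (2 * (((x j - x (j-1)) + (x (j+1) - x j))/2))) * W j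
             + θ * ((x (j+1) - x j) / (((x j - x (j-1)) + (x (j+1) - x j))/2)) * ρ (j+1)
                 * W (j+1))
            * W j * (((x j - x (j-1)) + (x (j+1) - x j))/2)
          + ρ J * (θ * W (J-1) + (1/2 - θ) * W J) * W J * (x J - x (J-1)))
      ≤ Real.sqrt ((1 + 4*max (-θ) 0) * ρhi) *
          Real.sqrt (∑ j ∈ Finset.Ico 1 J,
              (W j)^2 * ((x j - x (j-1)) + (x (j+1) - x j))/2
            + (W J)^2 * (x J - x (J-1))/2) :=
  stmt_15_general J hJ θ hθ x ρ W hxmono hW0 ρlo ρhi hρlo hρ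
end
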